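/- arXiv:math/0501202 — 4 statements merged into one kernel-verified Lean document; each statement's English description precedes it below -/
import Mathlib

section
/- Let I be a finite index set and consider Laurent monomials in commuting variables Y_{i,a} for i ∈ I, a ∈ ℂ*, with q ∈ ℂ* not a root of unity. A monomial m ≠ 1, written m = ∏ Y_{i,a}^{u_{i,a}(m)}, is called right-negative if for every a ∈ ℂ*, setting L = max{l ∈ ℤ : ∃ i ∈ I, u_{i,aq^L}(m) ≠ 0} (when this set is nonempty), one has u_{j,aq^L}(m) ≤ 0 for all j ∈ I. Then the product of two right-negative monomials is right-negative. -/
noncomputable section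

/-- A monomial in the variables `Y_{i,a}` (`i ∈ I`, `a ∈ ℂˣ`), written additively as its
finitely supported exponent function. -/
abbrev GMon (I : Type*) : Type _ := (I × ℂˣ) →₀ ℤ

/-- A monomial `m ≠ 1` is right-negative if for every `a ∈ ℂˣ`, at the maximal `L` such that
some variable `Y_{j, aq^L}` occurs in `m`, all occurring exponents at shift `L` are negative. -/
def RightNeg {I : Type*} (q : ℂˣ) (m : GMon I) : Prop :=
  m ≠ 0 ∧ ∀ (a : ℂˣ) (L : ℤ), (∃ i, m (i, a * q ^ L) ≠ 0) →
    (∀ (i : I) (l : ℤ), L < l → m (i, a * q ^ l) = 0) → ∀ j, m (j, a * q ^ L) ≤ 0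

/-- A monomial is dominant if all its exponents are nonnegative. -/
def Dominant {I : Type*} (m : GMon I) : Prop := ∀ p, 0 ≤ m p

/-- The monomial `A_{i,a}` associated to the Cartan matrix `C` with symmetrizers `r`:
`A_{i,a} = Y_{i,aq_i⁻¹} Y_{i,aq_i} ∏_{C_{j,i}=-1} Y_{j,a}⁻¹
  ∏_{C_{j,i}=-2} Y_{j,aq⁻¹}⁻¹Y_{j,aq}⁻¹ ∏_{C_{j,i}=-3} Y_{j,aq²}⁻¹Y_{j,a}⁻¹Y_{j,aq⁻²}⁻¹`,
where `q_i = q^{r_i}`. -/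
def Amon {I : Type*} [Fintype I] [DecidableEq I] (q : ℂˣ) (C : I → I → ℤ) (r : I → ℤ)
    (i : I) (a : ℂˣ) : GMon I :=
  Finsupp.single (i, a * q ^ (-(r i))) 1 + Finsupp.single (i, a * q ^ (r i)) 1
  - ∑ j : I, (if C j i = -1 then Finsupp.single (j, a) 1
      else if C j i = -2 then Finsupp.single (j, a * q⁻¹) 1 + Finsupp.single (j, a * q) 1
      else if C j i = -3 then
        Finsupp.single (j, a * q ^ (2:ℤ)) 1 + Finsupp.single (j, a) 1 +
          Finsupp.single (j, a * q ^ (-2:ℤ)) 1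
      else 0)

/-- The highest weight monomial `m_{k,a}^{(i)} = ∏_{s=1}^{k} Y_{i, a q_i^{2s-2}}` of a
Kirillov-Reshetikhin module, `q_i = q^{r_i}`. -/
def mki {I : Type*} [DecidableEq I] (q : ℂˣ) (r : I → ℤ) (i : I) (k : ℕ) (a : ℂˣ) : GMon I :=
  ∑ s ∈ Finset.range k, Finsupp.single (i, a * q ^ (r i * (2 * (s : ℤ)))) 1

/-- The weight `ω(m) = Σ u_{i,a}(m) Λ_i` of a monomial, written in coordinates with respect
to the fundamental weights `Λ_i`. -/
def wt {I : Type*} [DecidableEq I] (m : GMon I) (i : I) : ℤ :=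
  m.sum fun p v => if p.1 = i then v else 0


lemma qpow_injOn (q : ℂˣ) (hq : ∀ n : ℤ, n ≠ 0 → q ^ n ≠ 1) (a : ℂˣ) :
    Function.Injective (fun l : ℤ => a * q ^ l) := by
  intro l l' h
  by_contra hne
  apply hq (l - l') (sub_ne_zero.mpr hne)
  have h' : q ^ l = q ^ l' := mul_left_cancel h
  rw [zpow_sub, h', mul_inv_cancel]

lemma levels_finite {I : Type*} (q : ℂˣ) (hq : ∀ n : ℤ, n ≠ 0 → q ^ n ≠ 1)
    (m : GMon I) (a : ℂˣ) : {l : ℤ | ∃ i, m (i, a * q ^ l) ≠ 0}.Finite := by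
  have hsub : {l : ℤ | ∃ i, m (i, a * q ^ l) ≠ 0} ⊆
      (fun l : ℤ => a * q ^ l) ⁻¹' ↑(m.support.image Prod.snd) := by
    rintro l ⟨i, hi⟩
    simp only [Set.mem_preimage, Finset.coe_image, Set.mem_image, Finset.mem_coe,
      Finsupp.mem_support_iff]
    exact ⟨(i, a * q ^ l), hi, rfl⟩
  exact Set.Finite.subset
    (Set.Finite.preimage ((qpow_injOn q hq a).injOn) (m.support.image Prod.snd).finite_toSet) hsub

lemma exists_greatest' {S : Set ℤ} (hfin : S.Finite) (hne : S.Nonempty) :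
    ∃ L ∈ S, ∀ l ∈ S, l ≤ L := by
  have hne' : hfin.toFinset.Nonempty := by simpa using hne
  refine ⟨hfin.toFinset.max' hne', ?_, ?_⟩
  · simpa using hfin.toFinset.max'_mem hne'
  · intro l hl
    exact hfin.toFinset.le_max' l (by simpa using hl)

/-- with `q` not a root of unity, the product of two right-negative monomials
is right-negative. -/
theorem rightNeg_mul {I : Type*} (q : ℂˣ) (hq : ∀ n : ℤ, n ≠ 0 → q ^ n ≠ 1)
    (m₁ m₂ : GMon I) (h₁ : RightNeg q m₁) (h₂ : RightNeg q m₂) :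
    RightNeg q (m₁ + m₂) := by
  obtain ⟨h₁ne, h₁r⟩ := h₁
  obtain ⟨h₂ne, h₂r⟩ := h₂
  constructor
  · intro hzero
    have hneg : ∀ p, m₂ p = - m₁ p := by
      intro p
      have := DFunLike.congr_fun hzero p
      simp only [Finsupp.add_apply, Finsupp.coe_zero, Pi.zero_apply] at this
      linarith
    obtain ⟨⟨i₀, a⟩, hp⟩ := Finsupp.ne_iff.mp h₁ne
    simp only [Finsupp.coe_zero, Pi.zero_apply] at hp
    have h0 : (0 : ℤ) ∈ {l : ℤ | ∃ i, m₁ (i, a * q ^ l) ≠ 0} := ⟨i₀, by simpa using hp⟩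
    obtain ⟨L, hLmem, hLmax⟩ := exists_greatest' (levels_finite q hq m₁ a) ⟨0, h0⟩
    have habove : ∀ (i : I) (l : ℤ), L < l → m₁ (i, a * q ^ l) = 0 := by
      intro i l hl
      by_contra h'
      exact absurd (hLmax l ⟨i, h'⟩) (not_le.mpr hl)
    have hm1le := h₁r a L hLmem habove
    obtain ⟨i, hi⟩ := hLmem
    have hm2le := h₂r a L ⟨i, by rw [hneg]; simpa using hi⟩
      (fun i l hl => by rw [hneg, habove i l hl, neg_zero])
    have := hm2le i
    rw [hneg] at this
    have := hm1le i
    omega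
  · intro a L hex hmax j
    have key : ∀ l, L < l → ∀ i : I, m₁ (i, a * q ^ l) = 0 ∧ m₂ (i, a * q ^ l) = 0 := by
      by_contra hcon
      push_neg at hcon
      obtain ⟨l₀, hl₀, i₀, hi₀⟩ := hcon
      set T : Set ℤ := {l | L < l ∧ ∃ i, m₁ (i, a * q ^ l) ≠ 0 ∨ m₂ (i, a * q ^ l) ≠ 0} with hT
      have hTfin : T.Finite := by
        apply Set.Finite.subset ((levels_finite q hq m₁ a).union (levels_finite q hq m₂ a))
        rintro l ⟨-, i, h | h⟩
        · exact Or.inl ⟨i, h⟩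
        · exact Or.inr ⟨i, h⟩
      have hTne : T.Nonempty := ⟨l₀, hl₀, i₀, by tauto⟩
      obtain ⟨l', hl'mem, hl'max⟩ := exists_greatest' hTfin hTne
      obtain ⟨hLl', i', hi'⟩ := hl'mem
      have habove : ∀ (i : I) (l : ℤ), l' < l →
          m₁ (i, a * q ^ l) = 0 ∧ m₂ (i, a * q ^ l) = 0 := by
        intro i l hl
        constructor <;> by_contra h' <;>
          exact absurd (hl'max l ⟨lt_trans hLl' hl, i, by tauto⟩) (not_le.mpr hl)
      have hmzero : ∀ i : I, m₁ (i, a * q ^ l') + m₂ (i, a * q ^ l') = 0 := by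
        intro i
        have := hmax i l' hLl'
        simpa [Finsupp.add_apply] using this
      have hm1ex : ∃ i, m₁ (i, a * q ^ l') ≠ 0 := by
        rcases hi' with h | h
        · exact ⟨i', h⟩
        · refine ⟨i', fun h0 => h ?_⟩
          have := hmzero i'
          omega
      obtain ⟨k, hk⟩ := hm1ex
      have hm1le := h₁r a l' ⟨k, hk⟩ (fun i l hl => (habove i l hl).1)
      have hm2le := h₂r a l' ⟨k, fun h0 => hk (by have := hmzero k; omega)⟩
        (fun i l hl => (habove i l hl).2)
      have h1 := hm1le k
      have h2 := hm2le k
      have := hmzero k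
      omega
    have hm1le : ∀ j, m₁ (j, a * q ^ L) ≤ 0 := by
      by_cases h : ∃ i, m₁ (i, a * q ^ L) ≠ 0
      · exact h₁r a L h (fun i l hl => (key l hl i).1)
      · push_neg at h
        intro j; rw [h j]
    have hm2le : ∀ j, m₂ (j, a * q ^ L) ≤ 0 := by
      by_cases h : ∃ i, m₂ (i, a * q ^ L) ≠ 0
      · exact h₂r a L h (fun i l hl => (key l hl i).2)
      · push_neg at h
        intro j; rw [h j]
    simp only [Finsupp.add_apply]
    exact add_nonpos (hm1le j) (hm2le j)
end
end

section
/- Let C be a Cartan matrix of finite type with symmetrizing integers r_i (so that DC is symmetric with D = diag(r_1,...,r_n)), and define the monomials A_{i,a} = Y_{i,aq_i^{-1}} Y_{i,aq_i} ∏_{j: C_{j,i}=-1} Y_{j,a}^{-1} ∏_{j: C_{j,i}=-2} Y_{j,aq^{-1}}^{-1} Y_{j,aq}^{-1} ∏_{j: C_{j,i}=-3} Y_{j,aq^2}^{-1} Y_{j,a}^{-1} Y_{j,aq^{-2}}^{-1}, where q_i = q^{r_i}. Then for every i ∈ I and a ∈ ℂ*, the monomial A_{i,a}^{-1} is right-negative.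 -/
noncomputable section

/-! Every positive exponent of `A_{i,a}⁻¹` sits at some `Y_{j,aq^s}` with `C_{j,i} < 0` and
`s < -C_{j,i}`, while `Y_{i,aq_i}` occurs with a negative exponent. For a finite-type Cartan
matrix `-C_{j,i} ≤ r_i` (when `C_{j,i} ≤ -2`, necessarily `C_{i,j} = -1` and then
`r_i = -C_{j,i} r_j`), so each positive exponent lies strictly to the left of that negative
one on the same `q`-string and can never be the rightmost one. -/

theorem rightNeg_of_pos_lt_neg {I : Type*} {q : ℂˣ} {m : GMon I} {i : I} {a : ℂˣ} {R : ℤ}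
    (hneg : m (i, a * q ^ R) < 0) (hpos : ∀ p, 0 < m p → ∃ s < R, p.2 = a * q ^ s) :
    RightNeg q m := by
  refine ⟨fun h => by simp [h] at hneg, fun b L _ hmax j => ?_⟩
  by_contra! hj
  obtain ⟨s, hsR, hs⟩ := hpos _ hj
  have hshift : b * q ^ (L + (R - s)) = a * q ^ R := by
    rw [zpow_add, ← mul_assoc, show b * q ^ L = a * q ^ s from hs, mul_assoc, ← zpow_add,
      add_sub_cancel]
  have := hmax i (L + (R - s)) (by omega)
  rw [hshift] at this
  omega

theorem neg_cartan_le_symmetrizer {c c' ri rj : ℤ} (hc : c < 0) (hri : 1 ≤ ri) (hrj : 1 ≤ rj)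
    (hsym : ri * c' = rj * c) (hfin : c' * c ≤ 3) : -c ≤ ri := by
  have hc' : c' < 0 := by nlinarith
  rcases (show c = -1 ∨ c' = -1 by
    by_contra! h
    nlinarith [show c ≤ -2 by omega, show c' ≤ -2 by omega]) with rfl | rfl
  · omega
  · nlinarith

section Amon

variable {I : Type*} {q : ℂˣ} {C : I → I → ℤ} {i : I} {a : ℂˣ}

def amonFactor (q : ℂˣ) (C : I → I → ℤ) (i : I) (a : ℂˣ) (j : I) : GMon I :=
  if C j i = -1 then Finsupp.single (j, a) 1
  else if C j i = -2 then Finsupp.single (j, a * q⁻¹) 1 + Finsupp.single (j, a * q) 1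
  else if C j i = -3 then
    Finsupp.single (j, a * q ^ (2:ℤ)) 1 + Finsupp.single (j, a) 1 +
      Finsupp.single (j, a * q ^ (-2:ℤ)) 1
  else 0

theorem amon_eq [Fintype I] [DecidableEq I] (r : I → ℤ) :
    Amon q C r i a = Finsupp.single (i, a * q ^ (-(r i))) 1 + Finsupp.single (i, a * q ^ (r i)) 1
      - ∑ j, amonFactor q C i a j :=
  rfl

theorem exists_zpow_of_amonFactor_apply_ne_zero {j : I} {p : I × ℂˣ}
    (h : amonFactor q C i a j p ≠ 0) :
    p.1 = j ∧ C j i < 0 ∧ ∃ s < -C j i, p.2 = a * q ^ s := by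
  have hsingle : ∀ s : ℤ, s < -C j i → Finsupp.single (j, a * q ^ s) (1 : ℤ) p ≠ 0 →
      C j i < 0 → p.1 = j ∧ C j i < 0 ∧ ∃ s < -C j i, p.2 = a * q ^ s := fun s hs hp hC => by
    obtain rfl := (Finsupp.single_apply_ne_zero.mp hp).1
    exact ⟨rfl, hC, s, hs, rfl⟩
  unfold amonFactor at h
  split_ifs at h with h1 h2 h3
  · exact hsingle 0 (by omega) (by simpa using h) (by omega)
  · rw [Finsupp.add_apply] at h
    by_cases hm : Finsupp.single (j, a * q⁻¹) (1 : ℤ) p = 0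
    · rw [hm, zero_add] at h
      exact hsingle 1 (by omega) (by simpa using h) (by omega)
    · exact hsingle (-1) (by omega) (by simpa using hm) (by omega)
  · rw [Finsupp.add_apply, Finsupp.add_apply] at h
    by_cases hm : Finsupp.single (j, a * q ^ (-2 : ℤ)) (1 : ℤ) p = 0
    · by_cases hm' : Finsupp.single (j, a) (1 : ℤ) p = 0
      · rw [hm, hm', add_zero, add_zero] at h
        exact hsingle 2 (by omega) h (by omega)
      · exact hsingle 0 (by omega) (by simpa using hm') (by omega)
    · exact hsingle (-2) (by omega) hm (by omega)
  · exact absurd rfl h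

variable [Fintype I] [DecidableEq I] {r : I → ℤ}

theorem exists_amonFactor_apply_ne_zero {p : I × ℂˣ} (hp : 0 < (-Amon q C r i a) p) :
    ∃ j, amonFactor q C i a j p ≠ 0 := by
  rw [amon_eq, Finsupp.neg_apply, Finsupp.sub_apply, Finsupp.add_apply,
    Finsupp.finsetSum_apply] at hp
  have h₁ : 0 ≤ Finsupp.single (i, a * q ^ (-(r i))) (1 : ℤ) p :=
    Finsupp.single_nonneg.2 zero_le_one p
  have h₂ : 0 ≤ Finsupp.single (i, a * q ^ (r i)) (1 : ℤ) p :=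
    Finsupp.single_nonneg.2 zero_le_one p
  obtain ⟨j, -, hj⟩ := Finset.exists_ne_zero_of_sum_ne_zero (s := Finset.univ)
    (f := fun j => amonFactor q C i a j p) (by omega)
  exact ⟨j, hj⟩

theorem neg_amon_apply_lt_zero (hdiag : C i i = 2) :
    (-Amon q C r i a) (i, a * q ^ (r i)) < 0 := by
  have hfactor : ∀ j, amonFactor q C i a j (i, a * q ^ (r i)) = 0 := fun j => by
    by_contra h
    obtain ⟨hij, hC, -⟩ := exists_zpow_of_amonFactor_apply_ne_zero h
    have hji : j = i := hij.symm
    subst hji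
    omega
  rw [amon_eq, Finsupp.neg_apply, Finsupp.sub_apply, Finsupp.add_apply,
    Finsupp.finsetSum_apply, Finset.sum_eq_zero fun j _ => hfactor j, Finsupp.single_eq_same]
  have : 0 ≤ Finsupp.single (i, a * q ^ (-(r i))) (1 : ℤ) (i, a * q ^ (r i)) :=
    Finsupp.single_nonneg.2 zero_le_one _
  omega

end Amon

theorem Ainv_rightNeg_general
    {I : Type*} [Fintype I] [DecidableEq I] (q : ℂˣ)
    (C : I → I → ℤ) (r : I → ℤ)
    (hdiag : ∀ i, C i i = 2)
    (hfin : ∀ i j, i ≠ j → C i j * C j i ≤ 3)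
    (hr1 : ∀ i, 1 ≤ r i)
    (hsym : ∀ i j, r i * C i j = r j * C j i)
    (i : I) (a : ℂˣ) :
    RightNeg q (-(Amon q C r i a)) := by
  refine rightNeg_of_pos_lt_neg (neg_amon_apply_lt_zero (hdiag i)) fun p hp => ?_
  obtain ⟨j, hj⟩ := exists_amonFactor_apply_ne_zero hp
  obtain ⟨-, hC, s, hs, hps⟩ := exists_zpow_of_amonFactor_apply_ne_zero hj
  have hij : i ≠ j := by
    rintro rfl
    linarith [hdiag i]
  exact ⟨s, hs.trans_le (neg_cartan_le_symmetrizer hC (hr1 i) (hr1 j) (hsym i j) (hfin i j hij)),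
    hps⟩

/-- for a finite-type Cartan matrix, each `A_{i,a}⁻¹` is right-negative. -/
theorem Ainv_rightNeg
    {I : Type*} [Fintype I] [DecidableEq I] (q : ℂˣ) (hq : ∀ n : ℤ, n ≠ 0 → q ^ n ≠ 1)
    (C : I → I → ℤ) (r : I → ℤ)
    (hdiag : ∀ i, C i i = 2) (hoff : ∀ i j, i ≠ j → -3 ≤ C i j ∧ C i j ≤ 0)
    (hzero : ∀ i j, C i j = 0 ↔ C j i = 0)
    (hfin : ∀ i j, i ≠ j → C i j * C j i ≤ 3)
    (hr1 : ∀ i, 1 ≤ r i) (hr3 : ∀ i, r i ≤ 3)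
    (hsym : ∀ i j, r i * C i j = r j * C j i)
    (i : I) (a : ℂˣ) :
    RightNeg q (-(Amon q C r i a)) :=
  Ainv_rightNeg_general q C r hdiag hfin hr1 hsym i a
end
end

section
/- Define the partial order on monomials by m ≤ m' iff m'm^{-1} is a product of monomials A_{i,a} (i ∈ I, a ∈ ℂ*). If m' is right-negative and m ≤ m', then m is right-negative. -/
noncomputable section

-- Auxiliary lemmas

/-- Injectivity of `l ↦ a * q ^ l` when `q` is not a root of unity. -/
lemma upow_inj (q : ℂˣ) (hq : ∀ n : ℤ, n ≠ 0 → q ^ n ≠ 1) {a : ℂˣ} {s t : ℤ}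
    (h : a * q ^ s = a * q ^ t) : s = t := by
  by_contra hst
  apply hq (s - t) (sub_ne_zero.mpr hst)
  have h2 : q ^ s = q ^ t := mul_left_cancel h
  simp [zpow_sub, h2]

/-- In a finite set of points, given some point on the `q`-lattice of `b`, there is a maximal
lattice shift meeting the set. -/
lemma exists_max_shift {I : Type*} (q : ℂˣ) (hq : ∀ n : ℤ, n ≠ 0 → q ^ n ≠ 1)
    (s : Finset (I × ℂˣ)) (b : ℂˣ) (l0 : ℤ) (h : ∃ j, (j, b * q ^ l0) ∈ s) :
    ∃ L : ℤ, l0 ≤ L ∧ (∃ j, (j, b * q ^ L) ∈ s) ∧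
      ∀ (j : I) (l : ℤ), L < l → (j, b * q ^ l) ∉ s := by
  classical
  set g : I × ℂˣ → ℤ := fun p => if h : ∃ l : ℤ, p.2 = b * q ^ l then h.choose else l0 with hg
  have hgl : ∀ (j : I) (l : ℤ), g (j, b * q ^ l) = l := by
    intro j l
    have hex : ∃ l' : ℤ, ((j, b * q ^ l) : I × ℂˣ).2 = b * q ^ l' := ⟨l, rfl⟩
    simp only [hg, dif_pos hex]
    exact (upow_inj q hq hex.choose_spec).symm
  set T : Finset ℤ := (s.image g).filter (fun l => ∃ j : I, (j, b * q ^ l) ∈ s) with hT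
  have hmem : ∀ l : ℤ, (∃ j : I, (j, b * q ^ l) ∈ s) → l ∈ T := by
    rintro l ⟨j, hj⟩
    exact Finset.mem_filter.2 ⟨Finset.mem_image.2 ⟨(j, b * q ^ l), hj, hgl j l⟩, j, hj⟩
  have hne : T.Nonempty := ⟨l0, hmem l0 h⟩
  refine ⟨T.max' hne, T.le_max' l0 (hmem l0 h), ?_, ?_⟩
  · exact (Finset.mem_filter.1 (T.max'_mem hne)).2
  · intro j l hl hjs
    exact absurd (T.le_max' l (hmem l ⟨j, hjs⟩)) (not_le.2 hl)

/-- If `m` is right-negative and has no support above shift `L` on the lattice of `b`, then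
all its entries at shift `L` are nonpositive. -/
lemma rn_entry_le {I : Type*} (q : ℂˣ) {m : GMon I} (h : RightNeg q m) (b : ℂˣ) (L : ℤ)
    (habove : ∀ (j : I) (l : ℤ), L < l → m (j, b * q ^ l) = 0) (j : I) :
    m (j, b * q ^ L) ≤ 0 := by
  by_cases hx : ∃ i, m (i, b * q ^ L) ≠ 0
  · exact h.2 b L hx habove j
  · push_neg at hx
    exact (hx j).le

/-- The sum (product) of two right-negative monomials is right-negative. -/
lemma rn_add {I : Type*} (q : ℂˣ) (hq : ∀ n : ℤ, n ≠ 0 → q ^ n ≠ 1) {m1 m2 : GMon I}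
    (h1 : RightNeg q m1) (h2 : RightNeg q m2) : RightNeg q (m1 + m2) := by
  classical
  have key : ∀ (b : ℂˣ) (L : ℤ), (∃ j : I, (j, b * q ^ L) ∈ m1.support ∪ m2.support) →
      (∀ (j : I) (l : ℤ), L < l → (j, b * q ^ l) ∉ m1.support ∪ m2.support) →
      ∃ j : I, (m1 + m2) (j, b * q ^ L) < 0 := by
    intro b L hex hab
    have hab1 : ∀ (j : I) (l : ℤ), L < l → m1 (j, b * q ^ l) = 0 := by
      intro j l hl
      have := hab j l hl
      simp only [Finset.mem_union, Finsupp.mem_support_iff, not_or, not_not] at this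
      exact this.1
    have hab2 : ∀ (j : I) (l : ℤ), L < l → m2 (j, b * q ^ l) = 0 := by
      intro j l hl
      have := hab j l hl
      simp only [Finset.mem_union, Finsupp.mem_support_iff, not_or, not_not] at this
      exact this.2
    obtain ⟨j, hj⟩ := hex
    have hj' : m1 (j, b * q ^ L) ≠ 0 ∨ m2 (j, b * q ^ L) ≠ 0 := by
      simpa [Finset.mem_union, Finsupp.mem_support_iff] using hj
    have e1 := rn_entry_le q h1 b L hab1 j
    have e2 := rn_entry_le q h2 b L hab2 j
    refine ⟨j, ?_⟩
    rw [Finsupp.add_apply]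
    rcases hj' with hne | hne
    · have := lt_of_le_of_ne e1 hne
      omega
    · have := lt_of_le_of_ne e2 hne
      omega
  constructor
  · -- m1 + m2 ≠ 0
    obtain ⟨p, hp⟩ : ∃ p, m1 p ≠ 0 := by
      by_contra hc
      push_neg at hc
      exact h1.1 (Finsupp.ext hc)
    obtain ⟨i0, b⟩ := p
    have hp0 : ∃ j : I, (j, b * q ^ (0:ℤ)) ∈ m1.support ∪ m2.support := by
      refine ⟨i0, Finset.mem_union_left _ ?_⟩
      simpa [Finsupp.mem_support_iff] using hp
    obtain ⟨L, -, hex, hab⟩ := exists_max_shift q hq (m1.support ∪ m2.support) b 0 hp0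
    obtain ⟨j, hj⟩ := key b L hex hab
    intro h0
    rw [h0] at hj
    simp at hj
  · intro a L hex hab j
    have hab' : ∀ (j : I) (l : ℤ), L < l → m1 (j, a * q ^ l) = 0 ∧ m2 (j, a * q ^ l) = 0 := by
      by_contra hc
      push_neg at hc
      obtain ⟨j', l, hl, hne⟩ := hc
      have hmem : (j', a * q ^ l) ∈ m1.support ∪ m2.support := by
        simp only [Finset.mem_union, Finsupp.mem_support_iff]
        tauto
      obtain ⟨L', hL', hex', hab''⟩ :=
        exists_max_shift q hq (m1.support ∪ m2.support) a l ⟨j', hmem⟩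
      obtain ⟨j0, hj0⟩ := key a L' hex' hab''
      have h0 := hab j0 L' (lt_of_lt_of_le hl hL')
      rw [h0] at hj0
      exact absurd hj0 (lt_irrefl 0)
    have e1 := rn_entry_le q h1 a L (fun j l hl => (hab' j l hl).1) j
    have e2 := rn_entry_le q h2 a L (fun j l hl => (hab' j l hl).2) j
    rw [Finsupp.add_apply]
    omega

/-- Lower bounds on the symmetrizer `r i` from the Cartan matrix conditions. -/
lemma r_bound {I : Type*} (C : I → I → ℤ) (r : I → ℤ)
    (hdiag : ∀ i, C i i = 2) (hoff : ∀ i j, i ≠ j → -3 ≤ C i j ∧ C i j ≤ 0)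
    (hzero : ∀ i j, C i j = 0 ↔ C j i = 0)
    (hfin : ∀ i j, i ≠ j → C i j * C j i ≤ 3)
    (hr1 : ∀ i, 1 ≤ r i)
    (hsym : ∀ i j, r i * C i j = r j * C j i) (i j : I) :
    (C j i = -2 → 2 ≤ r i) ∧ (C j i = -3 → 3 ≤ r i) := by
  constructor <;> intro hji
  all_goals
    have hne : i ≠ j := by
      rintro rfl
      have := hdiag i
      omega
  all_goals
    have h1 := hoff i j hne
  all_goals
    have h2 : C i j ≠ 0 := by
      intro h
      rw [hzero i j] at h
      omega
  all_goals
    have h3 := hfin i j hne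
  all_goals
    rw [hji] at h3
  all_goals
    have h4 : C i j = -1 := by omega
  all_goals
    have h5 := hsym i j
  all_goals
    rw [h4, hji] at h5
  all_goals
    have h6 := hr1 j
  all_goals omega

/-- Pointwise formula for `Amon`. -/
lemma amon_apply {I : Type*} [Fintype I] [DecidableEq I] (q : ℂˣ) (C : I → I → ℤ)
    (r : I → ℤ) (i : I) (a : ℂˣ) (j : I) (c : ℂˣ) :
    Amon q C r i a (j, c) =
      (if ((i, a * q ^ (-(r i))) : I × ℂˣ) = (j, c) then 1 else 0) +
      (if ((i, a * q ^ (r i)) : I × ℂˣ) = (j, c) then 1 else 0) -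
      (if C j i = -1 then (if ((j, a) : I × ℂˣ) = (j, c) then 1 else 0)
       else if C j i = -2 then
         (if ((j, a * q⁻¹) : I × ℂˣ) = (j, c) then 1 else 0) +
         (if ((j, a * q) : I × ℂˣ) = (j, c) then 1 else 0)
       else if C j i = -3 then
         (if ((j, a * q ^ (2:ℤ)) : I × ℂˣ) = (j, c) then 1 else 0) +
         (if ((j, a) : I × ℂˣ) = (j, c) then 1 else 0) +
         (if ((j, a * q ^ (-2:ℤ)) : I × ℂˣ) = (j, c) then 1 else 0)
       else 0) := by
  classical
  unfold Amon
  rw [Finsupp.sub_apply, Finsupp.add_apply, Finsupp.single_apply, Finsupp.single_apply]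
  congr 1
  rw [Finsupp.finset_sum_apply]
  rw [Finset.sum_eq_single j]
  · by_cases hb1 : C j i = -1
    · rw [if_pos hb1, if_pos hb1, Finsupp.single_apply]
    · rw [if_neg hb1, if_neg hb1]
      by_cases hb2 : C j i = -2
      · rw [if_pos hb2, if_pos hb2, Finsupp.add_apply, Finsupp.single_apply,
          Finsupp.single_apply]
      · rw [if_neg hb2, if_neg hb2]
        by_cases hb3 : C j i = -3
        · rw [if_pos hb3, if_pos hb3, Finsupp.add_apply, Finsupp.add_apply,
            Finsupp.single_apply, Finsupp.single_apply, Finsupp.single_apply]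
        · rw [if_neg hb3, if_neg hb3]
          simp
  · intro b _ hb
    split_ifs <;>
      simp [Finsupp.add_apply, Finsupp.single_apply, Prod.ext_iff, hb]
  · intro hj
    exact absurd (Finset.mem_univ j) hj

/-- Above the top shift `r i`, `Amon q C r i a` vanishes, and at the top shift it is the
indicator of `i`. -/
lemma amon_top {I : Type*} [Fintype I] [DecidableEq I] (q : ℂˣ)
    (hq : ∀ n : ℤ, n ≠ 0 → q ^ n ≠ 1) (C : I → I → ℤ) (r : I → ℤ)
    (hdiag : ∀ i, C i i = 2) (hoff : ∀ i j, i ≠ j → -3 ≤ C i j ∧ C i j ≤ 0)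
    (hzero : ∀ i j, C i j = 0 ↔ C j i = 0)
    (hfin : ∀ i j, i ≠ j → C i j * C j i ≤ 3)
    (hr1 : ∀ i, 1 ≤ r i)
    (hsym : ∀ i j, r i * C i j = r j * C j i)
    (i : I) (a : ℂˣ) (j : I) (t : ℤ) (ht : r i ≤ t) :
    Amon q C r i a (j, a * q ^ t) = if j = i ∧ t = r i then 1 else 0 := by
  classical
  have hri := hr1 i
  have hC2 : C j i = -2 → 2 ≤ r i := (r_bound C r hdiag hoff hzero hfin hr1 hsym i j).1
  have hC3 : C j i = -3 → 3 ≤ r i := (r_bound C r hdiag hoff hzero hfin hr1 hsym i j).2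
  have hpt : ∀ (x : I) (s : ℤ), s ≠ t → ((x, a * q ^ s) : I × ℂˣ) ≠ (j, a * q ^ t) := by
    intro x s hs heq
    exact hs (upow_inj q hq (congrArg Prod.snd heq))
  have hpt0 : (0:ℤ) ≠ t → ∀ x : I, ((x, a) : I × ℂˣ) ≠ (j, a * q ^ t) := by
    intro h0 x heq
    apply h0
    apply upow_inj q hq (a := a)
    have := congrArg Prod.snd heq
    simpa using this
  have hptm1 : (-1:ℤ) ≠ t → ∀ x : I, ((x, a * q⁻¹) : I × ℂˣ) ≠ (j, a * q ^ t) := by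
    intro h0 x heq
    apply h0
    apply upow_inj q hq (a := a)
    have := congrArg Prod.snd heq
    simpa [zpow_neg, zpow_one] using this
  have hpt1 : (1:ℤ) ≠ t → ∀ x : I, ((x, a * q) : I × ℂˣ) ≠ (j, a * q ^ t) := by
    intro h0 x heq
    apply h0
    apply upow_inj q hq (a := a)
    have := congrArg Prod.snd heq
    simpa using this
  rw [amon_apply]
  rw [if_neg (hpt i (-(r i)) (by omega))]
  have h2 : (((i, a * q ^ (r i)) : I × ℂˣ) = (j, a * q ^ t)) ↔ (j = i ∧ t = r i) := by
    constructor
    · intro heq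
      obtain ⟨ha, hb⟩ := Prod.mk.injEq .. ▸ heq
      exact ⟨ha.symm, (upow_inj q hq hb).symm⟩
    · rintro ⟨rfl, rfl⟩
      rfl
  rw [if_congr h2 rfl rfl]
  have hbr : (if C j i = -1 then (if ((j, a) : I × ℂˣ) = (j, a * q ^ t) then 1 else 0)
       else if C j i = -2 then
         (if ((j, a * q⁻¹) : I × ℂˣ) = (j, a * q ^ t) then 1 else 0) +
         (if ((j, a * q) : I × ℂˣ) = (j, a * q ^ t) then 1 else 0)
       else if C j i = -3 then
         (if ((j, a * q ^ (2:ℤ)) : I × ℂˣ) = (j, a * q ^ t) then 1 else 0) +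
         (if ((j, a) : I × ℂˣ) = (j, a * q ^ t) then 1 else 0) +
         (if ((j, a * q ^ (-2:ℤ)) : I × ℂˣ) = (j, a * q ^ t) then 1 else 0)
       else 0) = (0:ℤ) := by
    by_cases hb1 : C j i = -1
    · rw [if_pos hb1, if_neg (hpt0 (by omega) j)]
    · rw [if_neg hb1]
      by_cases hb2 : C j i = -2
      · have := hC2 hb2
        rw [if_pos hb2, if_neg (hptm1 (by omega) j), if_neg (hpt1 (by omega) j)]
        norm_num
      · rw [if_neg hb2]
        by_cases hb3 : C j i = -3
        · have := hC3 hb3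
          rw [if_pos hb3, if_neg (hpt j 2 (by omega)), if_neg (hpt0 (by omega) j),
            if_neg (hpt j (-2) (by omega))]
          norm_num
        · rw [if_neg hb3]
  rw [hbr, zero_add, sub_zero]

/-- The support of `Amon q C r i a` lies on the `q`-lattice of `a`. -/
lemma amon_supp {I : Type*} [Fintype I] [DecidableEq I] (q : ℂˣ) (C : I → I → ℤ)
    (r : I → ℤ) (i : I) (a : ℂˣ) (j : I) (c : ℂˣ) (h : Amon q C r i a (j, c) ≠ 0) :
    ∃ t : ℤ, c = a * q ^ t := by
  classical
  by_contra hc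
  push_neg at hc
  apply h
  rw [amon_apply]
  have h1 : ∀ (x : I) (s : ℤ), ((x, a * q ^ s) : I × ℂˣ) ≠ (j, c) := by
    intro x s heq
    exact hc s (congrArg Prod.snd heq).symm
  have ha : ∀ x : I, ((x, a) : I × ℂˣ) ≠ (j, c) := by
    intro x heq
    apply hc 0
    have := (congrArg Prod.snd heq).symm
    simpa using this
  have hb : ∀ x : I, ((x, a * q⁻¹) : I × ℂˣ) ≠ (j, c) := by
    intro x heq
    apply hc (-1)
    have := (congrArg Prod.snd heq).symm
    simpa [zpow_neg, zpow_one] using this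
  have hcq : ∀ x : I, ((x, a * q) : I × ℂˣ) ≠ (j, c) := by
    intro x heq
    apply hc 1
    have := (congrArg Prod.snd heq).symm
    simpa using this
  rw [if_neg (h1 i _), if_neg (h1 i _)]
  by_cases hb1 : C j i = -1
  · rw [if_pos hb1, if_neg (ha j)]
    norm_num
  · rw [if_neg hb1]
    by_cases hb2 : C j i = -2
    · rw [if_pos hb2, if_neg (hb j), if_neg (hcq j)]
      norm_num
    · rw [if_neg hb2]
      by_cases hb3 : C j i = -3
      · rw [if_pos hb3, if_neg (h1 j 2), if_neg (ha j), if_neg (h1 j (-2))]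
        norm_num
      · rw [if_neg hb3]
        norm_num

/-- `A_{i,a}⁻¹` is right-negative. -/
lemma rn_neg_amon {I : Type*} [Fintype I] [DecidableEq I] (q : ℂˣ)
    (hq : ∀ n : ℤ, n ≠ 0 → q ^ n ≠ 1) (C : I → I → ℤ) (r : I → ℤ)
    (hdiag : ∀ i, C i i = 2) (hoff : ∀ i j, i ≠ j → -3 ≤ C i j ∧ C i j ≤ 0)
    (hzero : ∀ i j, C i j = 0 ↔ C j i = 0)
    (hfin : ∀ i j, i ≠ j → C i j * C j i ≤ 3)
    (hr1 : ∀ i, 1 ≤ r i)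
    (hsym : ∀ i j, r i * C i j = r j * C j i)
    (i : I) (a : ℂˣ) : RightNeg q (-(Amon q C r i a)) := by
  classical
  have Ftop : ∀ (j : I) (t : ℤ), r i ≤ t →
      Amon q C r i a (j, a * q ^ t) = if j = i ∧ t = r i then 1 else 0 :=
    fun j t ht => amon_top q hq C r hdiag hoff hzero hfin hr1 hsym i a j t ht
  have F1 : Amon q C r i a (i, a * q ^ (r i)) = 1 := by
    rw [Ftop i (r i) le_rfl]
    simp
  constructor
  · intro h0
    have h1 : (-(Amon q C r i a)) (i, a * q ^ (r i)) = 0 := by rw [h0]; rfl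
    rw [Finsupp.neg_apply, F1] at h1
    omega
  · intro a' L hex hab j
    obtain ⟨i', hi'⟩ := hex
    rw [Finsupp.neg_apply, neg_ne_zero] at hi'
    obtain ⟨t, hct⟩ := amon_supp q C r i a i' _ hi'
    have htle : t ≤ r i := by
      by_contra hgt
      push_neg at hgt
      rw [hct, Ftop i' t hgt.le] at hi'
      revert hi'
      split_ifs with hcond
      · exact fun _ => absurd hcond.2 (by omega)
      · simp
    have hteq : t = r i := by
      by_contra hne
      have hlt : t < r i := lt_of_le_of_ne htle hne
      have hpt : a' * q ^ (L + (r i - t)) = a * q ^ (r i) := by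
        rw [zpow_add, ← mul_assoc, hct, mul_assoc, ← zpow_add,
          show t + (r i - t) = r i by omega]
      have h0 := hab i (L + (r i - t)) (by omega)
      rw [hpt, Finsupp.neg_apply, F1] at h0
      omega
    rw [hteq] at hct
    rw [Finsupp.neg_apply, hct, Ftop j (r i) le_rfl]
    split_ifs <;> omega

/-- if `m′` is right-negative and `m ≤ m′` (i.e. `m′ m⁻¹` is a product of
monomials `A_{i,a}`), then `m` is right-negative. -/
theorem rightNeg_of_le
    {I : Type*} [Fintype I] [DecidableEq I] (q : ℂˣ) (hq : ∀ n : ℤ, n ≠ 0 → q ^ n ≠ 1)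
    (C : I → I → ℤ) (r : I → ℤ)
    (hdiag : ∀ i, C i i = 2) (hoff : ∀ i j, i ≠ j → -3 ≤ C i j ∧ C i j ≤ 0)
    (hzero : ∀ i j, C i j = 0 ↔ C j i = 0)
    (hfin : ∀ i j, i ≠ j → C i j * C j i ≤ 3)
    (hr1 : ∀ i, 1 ≤ r i) (hr3 : ∀ i, r i ≤ 3)
    (hsym : ∀ i j, r i * C i j = r j * C j i)
    (m m' : GMon I)
    (hle : ∃ s : Multiset (I × ℂˣ), m' = m + (s.map fun p => Amon q C r p.1 p.2).sum)
    (h : RightNeg q m') :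
    RightNeg q m := by
  classical
  obtain ⟨s, rfl⟩ := hle
  have key : ∀ (s : Multiset (I × ℂˣ)) (m0 : GMon I), RightNeg q m0 →
      RightNeg q (m0 - (s.map fun p => Amon q C r p.1 p.2).sum) := by
    intro s
    induction s using Multiset.induction_on with
    | empty => intro m0 h0; simpa using h0
    | cons p s ih =>
      intro m0 h0
      have h1 := rn_add q hq (ih m0 h0)
        (rn_neg_amon q hq C r hdiag hoff hzero hfin hr1 hsym p.1 p.2)
      have heq : m0 - (Multiset.map (fun p => Amon q C r p.1 p.2) (p ::ₘ s)).sum =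
          (m0 - (Multiset.map (fun p => Amon q C r p.1 p.2) s).sum) +
            (-(Amon q C r p.1 p.2)) := by
        rw [Multiset.map_cons, Multiset.sum_cons]
        abel
      rw [heq]
      exact h1
  have hkey := key s (m + (s.map fun p => Amon q C r p.1 p.2).sum) h
  simpa using hkey
end
end

section
/- The monomials A_{i,a}^{-1} (i ∈ I, a ∈ ℂ*) are algebraically independent in the Laurent polynomial ring ℤ[Y_{j,b}^{±}]: if a finite product Π A_{i,a}^{-v_{i,a}} with v_{i,a} ∈ ℤ equals 1, then all v_{i,a} = 0. -/
/-!
Fix a base point `a` and read off the exponents of `Y_{j, a qⁿ}`, `n ∈ ℤ`, in a monomial as the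
coefficients of a Laurent polynomial in `T`. Since `q` has infinite order, these strings are
disjoint copies of `ℤ`, and moving a variable along its string multiplies by a power of `T`.
Hence `A_{i,b}` is sent to the `i`-th column of the quantized Cartan matrix `C(T)` times the image
of `Y_{i,b}`, and a relation `∑ v_{i,b} A_{i,b} = 0` becomes `C(T) w = 0`, where `w` collects the
images of `v`. At `T = 1` the matrix `C(T)` specializes to `C`, which is nonsingular because
`diag(r) C` is positive definite; so `det C(T) ≠ 0`, and `w = 0` since `ℤ[T, T⁻¹]` is a domain.
-/

noncomputable section

open LaurentPolynomial
open scoped Matrix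

section OrbitCoeffs

variable {I G R : Type*} [Group G] [Semiring R] {q : G}

def orbitCoeffs (hq : Function.Injective (q ^ · : ℤ → G)) (a : G) (j : I) :
    ((I × G) →₀ R) →+ R[T;T⁻¹] :=
  AddMonoidAlgebra.coeffAddEquiv.symm.toAddMonoidHom.comp
    (Finsupp.comapDomain.addMonoidHom (f := fun n : ℤ => (j, a * q ^ n))
      fun _ _ h => hq (mul_left_cancel (Prod.ext_iff.1 h).2))

variable (hq : Function.Injective (q ^ · : ℤ → G)) (a : G)

@[simp]
lemma coeff_orbitCoeffs (j : I) (m : (I × G) →₀ R) (n : ℤ) :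
    (orbitCoeffs hq a j m).coeff n = m (j, a * q ^ n) :=
  rfl

lemma orbitCoeffs_single_of_ne {j k : I} (hkj : k ≠ j) (b : G) (c : R) :
    orbitCoeffs hq a j (Finsupp.single (k, b) c) = 0 := by
  ext n
  simp [hkj]

lemma orbitCoeffs_single_self_eq_single_self (i j : I) (b : G) (c : R) :
    orbitCoeffs hq a j (Finsupp.single (j, b) c) =
      orbitCoeffs hq a i (Finsupp.single (i, b) c) := by
  classical
  ext n
  simp [Finsupp.single_apply]

lemma orbitCoeffs_single_mul_zpow (j : I) (b : G) (l : ℤ) (c : R) :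
    orbitCoeffs hq a j (Finsupp.single (j, b * q ^ l) c) =
      T l * orbitCoeffs hq a j (Finsupp.single (j, b) c) := by
  classical
  ext n
  rw [T, AddMonoidAlgebra.coeff_single_mul_apply, one_mul, coeff_orbitCoeffs, coeff_orbitCoeffs]
  simp only [Finsupp.single_apply, Prod.mk.injEq, true_and, neg_add_eq_sub, zpow_sub,
    ← mul_assoc, eq_mul_inv_iff_mul_eq]

end OrbitCoeffs

section QuantumCartan

variable {I : Type*} [DecidableEq I]

lemma det_ne_zero_of_diagonal_mul_pos [Fintype I] (C : I → I → ℤ) (r : I → ℤ)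
    (hpos : ∀ x : I → ℚ, x ≠ 0 → 0 < ∑ i, ∑ j, x i * ((r i * C i j : ℤ) : ℚ) * x j) :
    (Matrix.of fun i j => (C i j : ℚ)).det ≠ 0 := by
  intro hdet
  obtain ⟨x, hx, hCx⟩ := Matrix.exists_mulVec_eq_zero_iff.2 hdet
  refine (hpos x hx).ne' ?_
  calc ∑ i, ∑ j, x i * ((r i * C i j : ℤ) : ℚ) * x j
      = ∑ i, x i * r i * (Matrix.of (fun i j => (C i j : ℚ)) *ᵥ x) i := by
        simp only [Matrix.mulVec, dotProduct, Matrix.of_apply, Finset.mul_sum]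
        push_cast
        ring_nf
    _ = 0 := by simp [hCx]

/-- Entry `(j, i)` is `∑ₗ (exponent of Y_{j, a qˡ} in A_{i,a}) Tˡ`. -/
def quantumCartanMatrix (C : I → I → ℤ) (r : I → ℤ) : Matrix I I ℤ[T;T⁻¹] :=
  Matrix.of fun j i => (if j = i then T (-r i) + T (r i) else 0) -
    if C j i = -1 then 1 else if C j i = -2 then T (-1) + T 1
    else if C j i = -3 then T 2 + 1 + T (-2) else 0

lemma quantumCartanMatrix_apply (C : I → I → ℤ) (r : I → ℤ) (j i : I) :
    quantumCartanMatrix C r j i = (if j = i then T (-r i) + T (r i) else 0) -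
      if C j i = -1 then 1 else if C j i = -2 then T (-1) + T 1
      else if C j i = -3 then T 2 + 1 + T (-2) else 0 :=
  rfl

lemma orbitCoeffs_Amon [Fintype I] {q : ℂˣ} (hq : Function.Injective (q ^ · : ℤ → ℂˣ))
    (C : I → I → ℤ) (r : I → ℤ) (a b : ℂˣ) (i j : I) :
    orbitCoeffs hq a j (Amon q C r i b) =
      quantumCartanMatrix C r j i * orbitCoeffs hq a i (Finsupp.single (i, b) 1) := by
  set δ : ℤ[T;T⁻¹] := orbitCoeffs hq a j (Finsupp.single (j, b) 1)
  have shift (l : ℤ) : orbitCoeffs hq a j (Finsupp.single (j, b * q ^ l) 1) = T l * δ :=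
    orbitCoeffs_single_mul_zpow hq a j b l 1
  have shift_one : orbitCoeffs hq a j (Finsupp.single (j, b * q) 1) = T 1 * δ := by
    simpa using shift 1
  have shift_neg_one : orbitCoeffs hq a j (Finsupp.single (j, b * q⁻¹) 1) = T (-1) * δ := by
    simpa using shift (-1)
  have hterm (k : I) : orbitCoeffs hq a j
      (if C k i = -1 then Finsupp.single (k, b) 1
      else if C k i = -2 then Finsupp.single (k, b * q⁻¹) 1 + Finsupp.single (k, b * q) 1
      else if C k i = -3 then
        Finsupp.single (k, b * q ^ (2:ℤ)) 1 + Finsupp.single (k, b) 1 +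
          Finsupp.single (k, b * q ^ (-2:ℤ)) 1
      else 0) = if k = j then
        (if C k i = -1 then 1 else if C k i = -2 then T (-1) + T 1
          else if C k i = -3 then T 2 + 1 + T (-2) else 0) * δ else 0 := by
    by_cases hkj : k = j
    · rw [if_pos hkj, hkj]
      split_ifs <;> simp only [map_add, shift, shift_one, shift_neg_one, map_zero, zero_mul,
        one_mul] <;> ring
    · rw [if_neg hkj]
      split_ifs <;> simp only [map_add, orbitCoeffs_single_of_ne hq a hkj, map_zero, add_zero]
  rw [Amon, map_sub, map_add, map_sum, Finset.sum_congr rfl fun k _ => hterm k,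
    Finset.sum_ite_eq', if_pos (Finset.mem_univ j), orbitCoeffs_single_self_eq_single_self hq a j i,
    quantumCartanMatrix_apply]
  by_cases hji : j = i
  · subst hji
    rw [shift, shift, if_pos rfl]
    ring
  · rw [orbitCoeffs_single_of_ne hq a (Ne.symm hji), orbitCoeffs_single_of_ne hq a (Ne.symm hji),
      if_neg hji]
    ring

lemma orbitCoeffs_sum_smul_Amon [Fintype I] {q : ℂˣ} (hq : Function.Injective (q ^ · : ℤ → ℂˣ))
    (C : I → I → ℤ) (r : I → ℤ) (a : ℂˣ) (v : GMon I) :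
    (fun j => orbitCoeffs hq a j (v.sum fun p c => c • Amon q C r p.1 p.2)) =
      quantumCartanMatrix C r *ᵥ fun i => orbitCoeffs hq a i v := by
  induction v using Finsupp.induction_linear with
  | zero =>
    simp only [Finsupp.sum_zero_index, map_zero]
    exact (Matrix.mulVec_zero _).symm
  | add f g hf hg =>
    rw [Finsupp.sum_add_index' (fun _ => zero_zsmul _) fun _ _ _ => add_zsmul _ _ _]
    simp only [map_add]
    rw [show (fun i => orbitCoeffs hq a i f + orbitCoeffs hq a i g) =
      (fun i => orbitCoeffs hq a i f) + (fun i => orbitCoeffs hq a i g) from rfl,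
      Matrix.mulVec_add, ← hf, ← hg]
    rfl
  | single p c =>
    funext j
    rw [Finsupp.sum_single_index (zero_zsmul _), map_zsmul, orbitCoeffs_Amon, Matrix.mulVec,
      dotProduct, Finset.sum_eq_single p.1 (fun k _ hk => by
        rw [orbitCoeffs_single_of_ne hq a (Ne.symm hk), mul_zero]) (by simp),
      ← Finsupp.smul_single_one p c, map_zsmul, mul_smul_comm]

lemma quantumCartanMatrix_map_eval_one (C : I → I → ℤ) (r : I → ℤ) (hdiag : ∀ i, C i i = 2)
    (hoff : ∀ i j, i ≠ j → -3 ≤ C i j ∧ C i j ≤ 0) :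
    (quantumCartanMatrix C r).map (eval₂ (Int.castRingHom ℚ) 1) =
      Matrix.of fun i j => (C i j : ℚ) := by
  ext j i
  rw [Matrix.map_apply, quantumCartanMatrix_apply, Matrix.of_apply]
  by_cases hji : j = i
  · subst hji
    norm_num [hdiag]
  · have hC := hoff j i hji
    rw [if_neg hji]
    split_ifs with h1 h2 h3
    · simp [h1]
    · norm_num [h2]
    · norm_num [h3]
    · simp [show C j i = 0 by omega]

lemma det_quantumCartanMatrix_ne_zero [Fintype I] (C : I → I → ℤ) (r : I → ℤ)
    (hdiag : ∀ i, C i i = 2) (hoff : ∀ i j, i ≠ j → -3 ≤ C i j ∧ C i j ≤ 0)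
    (hpos : ∀ x : I → ℚ, x ≠ 0 → 0 < ∑ i, ∑ j, x i * ((r i * C i j : ℤ) : ℚ) * x j) :
    (quantumCartanMatrix C r).det ≠ 0 := fun hdet =>
  det_ne_zero_of_diagonal_mul_pos C r hpos <| by
    rw [← quantumCartanMatrix_map_eval_one C r hdiag hoff, ← RingHom.mapMatrix_apply,
      ← RingHom.map_det, hdet, map_zero]

end QuantumCartan

theorem A_algebraically_independent_general
    {I : Type*} [Fintype I] [DecidableEq I] (q : ℂˣ) (hq : ∀ n : ℤ, n ≠ 0 → q ^ n ≠ 1)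
    (C : I → I → ℤ) (r : I → ℤ)
    (hdiag : ∀ i, C i i = 2) (hoff : ∀ i j, i ≠ j → -3 ≤ C i j ∧ C i j ≤ 0)
    (hpos : ∀ x : I → ℚ, x ≠ 0 → 0 < ∑ i, ∑ j, x i * ((r i * C i j : ℤ) : ℚ) * x j)
    (v : (I × ℂˣ) →₀ ℤ)
    (h : (v.sum fun p c => c • Amon q C r p.1 p.2) = 0) :
    v = 0 := by
  have hq_inj : Function.Injective (q ^ · : ℤ → ℂˣ) :=
    injective_zpow_iff_not_isOfFinOrder.2 fun hfin =>
      let ⟨n, hn, hqn⟩ := isOfFinOrder_iff_zpow_eq_one.1 hfin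
      hq n hn hqn
  ext ⟨i, a⟩
  have hcoeffs : (fun j => orbitCoeffs hq_inj a j v) = 0 :=
    Matrix.eq_zero_of_mulVec_eq_zero (det_quantumCartanMatrix_ne_zero C r hdiag hoff hpos) <| by
      rw [← orbitCoeffs_sum_smul_Amon, h]
      funext j
      exact map_zero _
  simpa using congr_arg (fun w => (w i).coeff 0) hcoeffs

/-- the monomials `A_{i,a}⁻¹` are algebraically independent: if a finite
product `∏ A_{i,a}^{v_{i,a}}` (with integer exponents) equals `1`, all exponents vanish. -/
theorem A_algebraically_independent
    {I : Type*} [Fintype I] [DecidableEq I] (q : ℂˣ) (hq : ∀ n : ℤ, n ≠ 0 → q ^ n ≠ 1)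
    (C : I → I → ℤ) (r : I → ℤ)
    (hdiag : ∀ i, C i i = 2) (hoff : ∀ i j, i ≠ j → -3 ≤ C i j ∧ C i j ≤ 0)
    (hzero : ∀ i j, C i j = 0 ↔ C j i = 0)
    (hfin : ∀ i j, i ≠ j → C i j * C j i ≤ 3)
    (hr1 : ∀ i, 1 ≤ r i) (hr3 : ∀ i, r i ≤ 3)
    (hsym : ∀ i j, r i * C i j = r j * C j i)
    (hpos : ∀ x : I → ℚ, x ≠ 0 → 0 < ∑ i, ∑ j, x i * ((r i * C i j : ℤ) : ℚ) * x j)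
    (v : (I × ℂˣ) →₀ ℤ)
    (h : (v.sum fun p c => c • Amon q C r p.1 p.2) = 0) :
    v = 0 :=
  A_algebraically_independent_general q hq C r hdiag hoff hpos v h
end
end
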